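/- arXiv:0805.1440 — 3 statements merged into one kernel-verified Lean document; each statement's English description precedes it below -/
import Mathlib

section
/- Let Q be a finite quiver without oriented cycles and β a dimension vector. There are only finitely many subsets of Rep(Q,β) that can be realized as the set Rep(Q,β)^{ss}_σ of σ-semi-stable representations for some effective weight σ ∈ C(Q,β). -/
/-! The semistable locus of `σ` is determined by whether `σ(β) = 0` and by which of the finitely
many dimension vectors `γ ≤ β` (those of possible subrepresentations) satisfy `σ(γ) ≤ 0`. Hence
`σ ↦ Rep(Q,β)^{ss}_σ` factors through a map to a finite set. -/

open scoped BigOperators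

namespace QuiverGIT

noncomputable section

variable {Q0 Q1 : Type} [Fintype Q0] [Fintype Q1]

/-- The representation space `Rep(Q,β)` of a quiver with vertex set `Q0`, arrow set `Q1`,
tail map `tl` and head map `hd`, for the dimension vector `β`. -/
abbrev RepSpace (tl hd : Q1 → Q0) (β : Q0 → ℕ) : Type :=
  ∀ a : Q1, Matrix (Fin (β (hd a))) (Fin (β (tl a))) ℂ

/-- The quiver has no oriented cycles. -/
def NoOrientedCycles (tl hd : Q1 → Q0) : Prop :=
  ∀ (n : ℕ) (c : Fin (n + 1) → Q1),
    (∀ i : Fin n, hd (c i.castSucc) = tl (c i.succ)) → hd (c (Fin.last n)) ≠ tl (c 0)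

/-- Pairing `σ(γ) = ∑ σ(x) γ(x)` of a real weight with a dimension vector. -/
def wt (σ : Q0 → ℝ) (γ : Q0 → ℕ) : ℝ := ∑ x, σ x * γ x

/-- The weight has integer coordinates. -/
def IsIntegralWt (σ : Q0 → ℝ) : Prop := ∀ x, ∃ n : ℤ, σ x = n

variable {tl hd : Q1 → Q0} {β : Q0 → ℕ}

/-- A family of subspaces `S x ≤ ℂ^{β(x)}` is a subrepresentation of `W`. -/
def IsSubrep (W : RepSpace tl hd β) (S : ∀ x, Submodule ℂ (Fin (β x) → ℂ)) : Prop :=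
  ∀ a : Q1, ∀ v ∈ S (tl a), (W a).mulVec v ∈ S (hd a)

/-- The dimension vector of a family of subspaces. -/
def dimVec (S : ∀ x : Q0, Submodule ℂ (Fin (β x) → ℂ)) : Q0 → ℕ :=
  fun x => Module.finrank ℂ (S x)

/-- `W` is `σ`-semi-stable. -/
def Semistable (σ : Q0 → ℝ) (W : RepSpace tl hd β) : Prop :=
  wt σ β = 0 ∧
    ∀ S : ∀ x, Submodule ℂ (Fin (β x) → ℂ), IsSubrep W S → wt σ (dimVec S) ≤ 0

/-- `W` is `σ`-stable. -/
def Stable (σ : Q0 → ℝ) (W : RepSpace tl hd β) : Prop :=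
  wt σ β = 0 ∧
    ∀ S : ∀ x, Submodule ℂ (Fin (β x) → ℂ), IsSubrep W S →
      S ≠ (fun _ => ⊥) → S ≠ (fun _ => ⊤) → wt σ (dimVec S) < 0

/-- The set `Rep(Q,β)^{ss}_σ` of `σ`-semi-stable representations. -/
def ssSet (tl hd : Q1 → Q0) (β : Q0 → ℕ) (σ : Q0 → ℝ) : Set (RepSpace tl hd β) :=
  {W | Semistable σ W}

/-- `β₁ ↪ β` : every `β`-dimensional representation has a subrepresentation of
dimension vector `β₁`. -/
def Embeds (tl hd : Q1 → Q0) (β β₁ : Q0 → ℕ) : Prop :=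
  ∀ W : RepSpace tl hd β, ∃ S : ∀ x, Submodule ℂ (Fin (β x) → ℂ),
    IsSubrep W S ∧ ∀ x, Module.finrank ℂ (S x) = β₁ x

/-- The cone `C(Q,β)` of effective weights. -/
def EffCone (tl hd : Q1 → Q0) (β : Q0 → ℕ) : Set (Q0 → ℝ) :=
  {σ | wt σ β = 0 ∧ ∀ β₁ : Q0 → ℕ, Embeds tl hd β β₁ → wt σ β₁ ≤ 0}

/-- The action of `GL(β) = ∏ GL(β(x))` on `Rep(Q,β)` by simultaneous conjugation. -/
def glAct (g : ∀ x, GL (Fin (β x)) ℂ) (W : RepSpace tl hd β) : RepSpace tl hd β :=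
  fun a => (g (hd a)).val * W a * ((g (tl a))⁻¹).val

/-- The `GL(β)`-orbit of `W`. -/
def glOrbit (W : RepSpace tl hd β) : Set (RepSpace tl hd β) :=
  {V | ∃ g, V = glAct g W}

/-- The coordinates of a point of `Rep(Q,β)`. -/
def coordFn (W : RepSpace tl hd β) : (Σ a : Q1, Fin (β (hd a)) × Fin (β (tl a))) → ℂ :=
  fun p => W p.1 p.2.1 p.2.2

/-- The Zariski closure of a subset of `Rep(Q,β)`: the set of points where every
polynomial vanishing on the subset vanishes. -/
def zClosure (Z : Set (RepSpace tl hd β)) : Set (RepSpace tl hd β) :=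
  {V | ∀ p : MvPolynomial ((a : Q1) × (Fin (β (hd a)) × Fin (β (tl a)))) ℂ,
      (∀ U ∈ Z, MvPolynomial.eval (coordFn U) p = 0) →
        MvPolynomial.eval (coordFn V) p = 0}

/-- `W` is `σ`-polystable : it is `σ`-semi-stable and its `GL(β)`-orbit is
(Zariski) closed in `Rep(Q,β)^{ss}_σ`. -/
def Polystable (σ : Q0 → ℝ) (W : RepSpace tl hd β) : Prop :=
  Semistable σ W ∧ zClosure (glOrbit W) ∩ ssSet tl hd β σ = glOrbit W

/-- The orbit cone `Ω(W)` of a representation `W`. -/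
def OmegaCone (W : RepSpace tl hd β) : Set (Q0 → ℝ) :=
  {σ | Semistable σ W}

/-- The GIT-cone `C(σ) = {σ' ∈ ℝ^{Q_0} : Rep(Q,β)^{ss}_σ ⊆ Rep(Q,β)^{ss}_{σ'}}`. -/
def gitCone (tl hd : Q1 → Q0) (β : Q0 → ℕ) (σ : Q0 → ℝ) : Set (Q0 → ℝ) :=
  {σ' | ssSet tl hd β σ ⊆ ssSet tl hd β σ'}

/-- The GIT-cone `C(σ) = {σ' ∈ C(Q,β) : Rep(Q,β)^{ss}_σ ⊆ Rep(Q,β)^{ss}_{σ'}}`. -/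
def gitConeE (tl hd : Q1 → Q0) (β : Q0 → ℕ) (σ : Q0 → ℝ) : Set (Q0 → ℝ) :=
  {σ' | σ' ∈ EffCone tl hd β ∧ ssSet tl hd β σ ⊆ ssSet tl hd β σ'}

/-- A rational convex polyhedral cone in `ℝ^{Q_0}` : a set cut out by finitely many
homogeneous linear inequalities with rational coefficients. -/
def IsRatPolyCone (C : Set (Q0 → ℝ)) : Prop :=
  ∃ s : Finset (Q0 → ℚ), C = {σ | ∀ v ∈ s, (∑ x, σ x * (v x : ℝ)) ≤ 0}

/-- `F` is a face of the cone `C`, cut out by a supporting linear functional. -/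
def IsFaceOf (F C : Set (Q0 → ℝ)) : Prop :=
  ∃ ℓ : (Q0 → ℝ) →ₗ[ℝ] ℝ, (∀ σ ∈ C, ℓ σ ≤ 0) ∧ F = {σ ∈ C | ℓ σ = 0}

/-- The restriction of `W` to the subrepresentation `T` is a `σ`-stable representation
(subrepresentations of `W|_T` are exactly the subrepresentations of `W` contained in `T`). -/
def IsStableOn (σ : Q0 → ℝ) (W : RepSpace tl hd β)
    (T : ∀ x, Submodule ℂ (Fin (β x) → ℂ)) : Prop :=
  wt σ (dimVec T) = 0 ∧
    ∀ U : ∀ x, Submodule ℂ (Fin (β x) → ℂ), IsSubrep W U → (∀ x, U x ≤ T x) →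
      U ≠ (fun _ => ⊥) → U ≠ T → wt σ (dimVec U) < 0

/-- `W` is a direct sum of `σ`-stable representations : `ℂ^β` decomposes as an internal
direct sum of subrepresentations on each of which `W` restricts to a `σ`-stable
representation. -/
def IsDirectSumOfStables (σ : Q0 → ℝ) (W : RepSpace tl hd β) : Prop :=
  ∃ (n : ℕ) (T : Fin n → ∀ x, Submodule ℂ (Fin (β x) → ℂ)),
    (∀ i, IsSubrep W (T i)) ∧
    (∀ x, iSupIndep fun i => T i x) ∧
    (∀ x, (⨆ i, T i x) = ⊤) ∧
    ∀ i, IsStableOn σ W (T i)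

/-- The factor `T/S` of two nested subrepresentations `S ≤ T` of `W` is a `σ`-stable
representation (subrepresentations of `T/S` correspond to intermediate
subrepresentations `S ≤ U ≤ T` of `W`, with `d_{U/S} = d_U - d_S`). -/
def FactorStable (σ : Q0 → ℝ) (W : RepSpace tl hd β)
    (S T : ∀ x, Submodule ℂ (Fin (β x) → ℂ)) : Prop :=
  wt σ (dimVec T) - wt σ (dimVec S) = 0 ∧
    ∀ U : ∀ x, Submodule ℂ (Fin (β x) → ℂ), IsSubrep W U →
      (∀ x, S x ≤ U x) → (∀ x, U x ≤ T x) → U ≠ S → U ≠ T →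
        wt σ (dimVec U) - wt σ (dimVec S) < 0

/-- A Jordan–Hölder filtration `0 = W_0 ⊊ W_1 ⊊ ⋯ ⊊ W_l = W` of `W` in the category of
`σ`-semi-stable representations: all factors `W_i/W_{i-1}` are `σ`-stable. -/
def IsJHFiltration (σ : Q0 → ℝ) (W : RepSpace tl hd β) (l : ℕ)
    (S : Fin (l + 1) → ∀ x, Submodule ℂ (Fin (β x) → ℂ)) : Prop :=
  (∀ i, IsSubrep W (S i)) ∧
  (∀ x, S 0 x = ⊥) ∧
  (∀ x, S (Fin.last l) x = ⊤) ∧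
  (∀ i : Fin l, ∀ x, S i.castSucc x ≤ S i.succ x) ∧
  (∀ i : Fin l, S i.castSucc ≠ S i.succ) ∧
  (∀ i : Fin l, FactorStable σ W (S i.castSucc) (S i.succ))

/-- `V` is isomorphic to the associated graded representation
`⊕_{i=1}^{l} S_i/S_{i-1}` of the filtration `S` of `W` : there are linear maps
`f i x : ℂ^{β(x)} → ℂ^{β(x)}` which vanish on `S_{i-1}`, are injective on `S_i`
modulo `S_{i-1}`, intertwine `W` and `V` on `S_i`, and whose images decompose
`ℂ^{β(x)}` as an internal direct sum. -/
def IsGradedIso (W V : RepSpace tl hd β) (l : ℕ)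
    (S : Fin (l + 1) → ∀ x, Submodule ℂ (Fin (β x) → ℂ)) : Prop :=
  ∃ f : Fin l → ∀ x, (Fin (β x) → ℂ) →ₗ[ℂ] (Fin (β x) → ℂ),
    (∀ (i : Fin l) (x : Q0), ∀ v ∈ S i.castSucc x, f i x v = 0) ∧
    (∀ (i : Fin l) (x : Q0), ∀ v ∈ S i.succ x, f i x v = 0 → v ∈ S i.castSucc x) ∧
    (∀ (i : Fin l) (a : Q1), ∀ v ∈ S i.succ (tl a),
      f i (hd a) ((W a).mulVec v) = (V a).mulVec (f i (tl a) v)) ∧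
    (∀ x : Q0, iSupIndep fun i : Fin l => (S i.succ x).map (f i x)) ∧
    (∀ x : Q0, (⨆ i : Fin l, (S i.succ x).map (f i x)) = ⊤)

theorem _root_.Function.FactorsThrough.finite_range {α γ δ : Type*} [Finite γ] {f : α → δ}
    {g : α → γ} (h : f.FactorsThrough g) : (Set.range f).Finite := by
  rcases isEmpty_or_nonempty α with _ | ⟨⟨a⟩⟩
  · simp [Set.range_eq_empty]
  · refine (Set.finite_range (Function.extend g f fun _ => f a)).subset ?_
    rintro _ ⟨x, rfl⟩
    exact ⟨g x, h.extend_apply _ x⟩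

omit [Fintype Q0] [Fintype Q1] in
lemma dimVec_le (S : ∀ x, Submodule ℂ (Fin (β x) → ℂ)) : dimVec S ≤ β := fun x =>
  (Submodule.finrank_le (S x)).trans_eq (Module.finrank_fin_fun ℂ)

omit [Fintype Q1] in
lemma ssSet_eq_of_wt_nonpos_iff {σ τ : Q0 → ℝ} (h0 : wt σ β = 0 ↔ wt τ β = 0)
    (h : ∀ γ ≤ β, wt σ γ ≤ 0 ↔ wt τ γ ≤ 0) : ssSet tl hd β σ = ssSet tl hd β τ := by
  ext W
  simp only [ssSet, Set.mem_ofPred_eq, Semistable, h0]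
  exact and_congr_right fun _ => forall_congr' fun S =>
    imp_congr_right fun _ => h _ (dimVec_le S)

omit [Fintype Q1] in
lemma ssSet_factorsThrough : (ssSet tl hd β).FactorsThrough
    fun σ => (wt σ β = 0, {γ : {γ // γ ≤ β} | wt σ γ ≤ 0}) := by
  intro σ τ hστ
  simp only [Prod.mk.injEq, Set.ext_iff, Set.mem_ofPred_eq, Subtype.forall] at hστ
  exact ssSet_eq_of_wt_nonpos_iff (iff_of_eq hστ.1) hστ.2

theorem finitely_many_semistable_loci_general :
    {Z : Set (RepSpace tl hd β) | ∃ σ ∈ EffCone tl hd β, Z = ssSet tl hd β σ}.Finite := by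
  classical
  refine ssSet_factorsThrough.finite_range.subset ?_
  rintro _ ⟨σ, -, rfl⟩
  exact ⟨σ, rfl⟩

/-- Only finitely many subsets of `Rep(Q,β)` arise as the set of
`σ`-semi-stable representations for some effective weight `σ ∈ C(Q,β)`. -/
theorem finitely_many_semistable_loci (hQ : NoOrientedCycles tl hd) :
    {Z : Set (RepSpace tl hd β) | ∃ σ ∈ EffCone tl hd β, Z = ssSet tl hd β σ}.Finite :=
  finitely_many_semistable_loci_general

end

end QuiverGIT
end

section
/- Let Q be a finite quiver without oriented cycles and β a dimension vector. Every effective weight σ ∈ C(Q,β) is GIT-equivalent to some integral effective weight, i.e. there exists σ₁ ∈ Σ(Q,β) = C(Q,β) ∩ ℤ^{Q_0} with Rep(Q,β)^{ss}_σ = Rep(Q,β)^{ss}_{σ₁}. -/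
open scoped BigOperators

namespace QuiverGIT

noncomputable section

variable {Q0 Q1 : Type} [Fintype Q0] [Fintype Q1]

variable {tl hd : Q1 → Q0} {β : Q0 → ℕ}

open Finset in
lemma rat_dense_sol {Q0 : Type} [Fintype Q0] (s : Finset (Q0 → ℕ)) :
    ∀ (σ : Q0 → ℝ), (∀ γ ∈ s, ∑ x, σ x * γ x = 0) →
    ∀ ε : ℝ, 0 < ε →
    ∃ q : Q0 → ℚ, (∀ γ ∈ s, ∑ x, (q x : ℝ) * γ x = 0) ∧ ∀ x, |(q x : ℝ) - σ x| < ε := by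
  classical
  induction s using Finset.induction_on with
  | empty =>
      intro σ _ ε hε
      choose q hq using fun x => exists_rat_near (σ x) hε
      refine ⟨q, by simp, fun x => by rw [abs_sub_comm]; exact hq x⟩
  | @insert a s ha ih =>
      intro σ hσ ε hε
      have ha0 : ∑ x, σ x * a x = 0 := hσ a (mem_insert_self a s)
      have hrest : ∀ γ ∈ s, ∑ x, σ x * γ x = 0 := fun γ hγ => hσ γ (mem_insert_of_mem hγ)
      by_cases hcase : ∀ q : Q0 → ℚ, (∀ γ ∈ s, ∑ x, (q x : ℝ) * γ x = 0) →
          ∑ x, (q x : ℝ) * a x = 0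
      · obtain ⟨q, hq1, hq2⟩ := ih σ hrest ε hε
        refine ⟨q, ?_, hq2⟩
        intro γ hγ
        rcases mem_insert.mp hγ with rfl | h
        · exact hcase q hq1
        · exact hq1 γ h
      · push_neg at hcase
        obtain ⟨u, hu1, hu2⟩ := hcase
        set D : ℝ := ∑ x, (u x : ℝ) * a x with hD
        have hDne : D ≠ 0 := hu2
        have hDpos : 0 < |D| := abs_pos.mpr hDne
        set c : ℝ := ∑ x, (a x : ℝ) with hc
        have hc0 : 0 ≤ c := Finset.sum_nonneg fun x _ => by positivity
        set Mu : ℝ := ∑ x, |(u x : ℝ)| with hMu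
        have hMu0 : 0 ≤ Mu := Finset.sum_nonneg fun x _ => abs_nonneg _
        set K : ℝ := 1 + c * Mu / |D| with hK
        have hK1 : 1 ≤ K := by
          rw [hK]
          have : 0 ≤ c * Mu / |D| := by positivity
          linarith
        have hKpos : 0 < K := by linarith
        set δ : ℝ := ε / K with hδdef
        have hδ : 0 < δ := div_pos hε hKpos
        obtain ⟨v, hv1, hv2⟩ := ih σ hrest δ hδ
        set rq : ℚ := (∑ x, v x * (a x : ℚ)) / (∑ x, u x * (a x : ℚ)) with hrq
        have hrqR : (rq : ℝ) = (∑ x, (v x : ℝ) * a x) / D := by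
          rw [hrq]; push_cast; rw [hD]
        refine ⟨fun x => v x - rq * u x, ?_, ?_⟩
        · intro γ hγ
          have expand : ∑ x, (((v x - rq * u x : ℚ)) : ℝ) * γ x
              = (∑ x, (v x : ℝ) * γ x) - (rq : ℝ) * ∑ x, (u x : ℝ) * γ x := by
            rw [Finset.mul_sum, ← Finset.sum_sub_distrib]
            congr 1; ext x; push_cast; ring
          rcases mem_insert.mp hγ with rfl | h
          · rw [expand, hrqR, ← hD, div_mul_cancel₀ _ hDne, sub_self]
          · rw [expand, hv1 γ h, hu1 γ h]; ring
        · intro x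
          have hnum : |∑ x, (v x : ℝ) * a x| ≤ δ * c := by
            have key : ∑ x, (v x : ℝ) * a x = ∑ x, ((v x : ℝ) - σ x) * a x := by
              have h2 : ∑ x, ((v x : ℝ) - σ x) * (a x : ℝ)
                  = ∑ x, (v x : ℝ) * a x - ∑ x, σ x * a x := by
                rw [← Finset.sum_sub_distrib]; congr 1; ext y; ring
              rw [h2, ha0, sub_zero]
            rw [key]
            calc |∑ x, ((v x : ℝ) - σ x) * a x| ≤ ∑ x, |((v x : ℝ) - σ x) * a x| :=
                  Finset.abs_sum_le_sum_abs _ _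
              _ ≤ ∑ x, δ * a x := by
                  refine Finset.sum_le_sum fun y _ => ?_
                  rw [abs_mul, abs_of_nonneg (by positivity : (0:ℝ) ≤ (a y : ℝ))]
                  exact mul_le_mul_of_nonneg_right (le_of_lt (hv2 y)) (by positivity)
              _ = δ * c := by rw [hc, Finset.mul_sum]
          have hrqabs : |(rq : ℝ)| ≤ δ * c / |D| := by
            rw [hrqR, abs_div]
            gcongr
          have huxMu : |(u x : ℝ)| ≤ Mu := by
            rw [hMu]
            exact Finset.single_le_sum (f := fun y => |(u y : ℝ)|)
              (fun y _ => abs_nonneg _) (mem_univ x)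
          push_cast
          have h1 : |(v x : ℝ) - (rq : ℝ) * u x - σ x|
              ≤ |(v x : ℝ) - σ x| + |(rq : ℝ)| * |(u x : ℝ)| := by
            have h := abs_add_le ((v x : ℝ) - σ x) (-((rq : ℝ) * u x))
            rw [abs_neg, abs_mul] at h
            calc |(v x : ℝ) - (rq : ℝ) * u x - σ x|
                = |((v x : ℝ) - σ x) + -((rq : ℝ) * u x)| := by ring_nf
              _ ≤ _ := h
          have h2 : |(rq : ℝ)| * |(u x : ℝ)| ≤ δ * c / |D| * Mu :=
            mul_le_mul hrqabs huxMu (abs_nonneg _) (by positivity)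
          have h3 : δ * K = ε := div_mul_cancel₀ ε (ne_of_gt hKpos)
          calc |(v x : ℝ) - (rq : ℝ) * u x - σ x|
              ≤ |(v x : ℝ) - σ x| + |(rq : ℝ)| * |(u x : ℝ)| := h1
            _ < δ + δ * c / |D| * Mu := add_lt_add_of_lt_of_le (hv2 x) h2
            _ = δ * K := by rw [hK]; ring
            _ = ε := h3

/-- Every effective weight is GIT-equivalent to an integral effective
weight. -/
theorem git_equivalent_to_integral_weight (hQ : NoOrientedCycles tl hd)
    (σ : Q0 → ℝ) (hσ : σ ∈ EffCone tl hd β) :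
    ∃ σ₁ : Q0 → ℝ, σ₁ ∈ EffCone tl hd β ∧ IsIntegralWt σ₁ ∧
      ssSet tl hd β σ = ssSet tl hd β σ₁ := by
  classical
  obtain ⟨hβ0, heff⟩ := hσ
  set G : Finset (Q0 → ℕ) := Fintype.piFinset (fun x => Finset.range (β x + 1)) with hG
  have hmemG : ∀ γ : Q0 → ℕ, (∀ x, γ x ≤ β x) → γ ∈ G := by
    intro γ h
    rw [hG, Fintype.mem_piFinset]
    exact fun x => Finset.mem_range.mpr (Nat.lt_succ_of_le (h x))
  have hGle : ∀ γ ∈ G, ∀ x, γ x ≤ β x := by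
    intro γ hγ x
    rw [hG, Fintype.mem_piFinset] at hγ
    exact Nat.lt_succ_iff.mp (Finset.mem_range.mp (hγ x))
  set Z : Finset (Q0 → ℕ) := G.filter (fun γ => wt σ γ = 0) with hZ
  set C : ℝ := ∑ x, (β x : ℝ) with hC
  have hC0 : 0 ≤ C := Finset.sum_nonneg fun x _ => by positivity
  set F : Finset ℝ :=
    insert 1 ((G.filter (fun γ => wt σ γ ≠ 0)).image (fun γ => |wt σ γ|)) with hF
  have hFne : F.Nonempty := ⟨1, Finset.mem_insert_self _ _⟩
  set m : ℝ := F.min' hFne with hm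
  have hmpos : 0 < m := by
    have hmF : m ∈ F := F.min'_mem hFne
    rw [hF, Finset.mem_insert] at hmF
    rcases hmF with h1 | h2
    · rw [hm] at *; rw [h1]; norm_num
    · obtain ⟨γ, hγ, hh⟩ := Finset.mem_image.mp h2
      rw [← hh]
      exact abs_pos.mpr (Finset.mem_filter.mp hγ).2
  set ε : ℝ := m / (C + 1) with hε
  have hεpos : 0 < ε := div_pos hmpos (by linarith)
  have hεC : ε * C < m := by
    rw [hε, div_mul_eq_mul_div, div_lt_iff₀ (by linarith : (0:ℝ) < C + 1)]
    nlinarith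
  have hZsol : ∀ γ ∈ Z, ∑ x, σ x * γ x = 0 := by
    intro γ hγ
    exact (Finset.mem_filter.mp hγ).2
  obtain ⟨q, hq1, hq2⟩ := rat_dense_sol Z σ hZsol ε hεpos
  set σq : Q0 → ℝ := fun x => (q x : ℝ) with hσq
  -- difference bound
  have hdiff : ∀ γ ∈ G, |wt σq γ - wt σ γ| ≤ ε * C := by
    intro γ hγ
    have hexp : wt σq γ - wt σ γ = ∑ x, ((q x : ℝ) - σ x) * γ x := by
      rw [wt, wt, ← Finset.sum_sub_distrib]
      congr 1; ext x; rw [hσq]; ring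
    rw [hexp]
    calc |∑ x, ((q x : ℝ) - σ x) * γ x| ≤ ∑ x, |((q x : ℝ) - σ x) * γ x| :=
          Finset.abs_sum_le_sum_abs _ _
      _ ≤ ∑ x, ε * β x := by
          refine Finset.sum_le_sum fun y _ => ?_
          rw [abs_mul, abs_of_nonneg (by positivity : (0:ℝ) ≤ (γ y : ℝ))]
          have h1 : |(q y : ℝ) - σ y| * (γ y : ℝ) ≤ ε * γ y :=
            mul_le_mul_of_nonneg_right (le_of_lt (hq2 y)) (by positivity)
          have h2 : ε * (γ y : ℝ) ≤ ε * β y := by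
            have := hGle γ hγ y
            have : (γ y : ℝ) ≤ β y := by exact_mod_cast this
            nlinarith
          linarith
      _ = ε * C := by rw [hC, Finset.mul_sum]
  -- zero preservation
  have hzeroq : ∀ γ ∈ G, wt σ γ = 0 → wt σq γ = 0 := by
    intro γ hγ h0
    have : γ ∈ Z := Finset.mem_filter.mpr ⟨hγ, h0⟩
    exact hq1 γ this
  -- strict sign preservation
  have hmle : ∀ γ ∈ G, wt σ γ ≠ 0 → m ≤ |wt σ γ| := by
    intro γ hγ hne
    refine F.min'_le _ ?_
    rw [hF]
    exact Finset.mem_insert_of_mem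
      (Finset.mem_image_of_mem _ (Finset.mem_filter.mpr ⟨hγ, hne⟩))
  have hiffq : ∀ γ ∈ G, (wt σ γ ≤ 0 ↔ wt σq γ ≤ 0) := by
    intro γ hγ
    rcases lt_trichotomy (wt σ γ) 0 with hlt | heq | hgt
    · have hne : wt σ γ ≠ 0 := ne_of_lt hlt
      have h1 := hmle γ hγ hne
      rw [abs_of_neg hlt] at h1
      have h2 := hdiff γ hγ
      rw [abs_le] at h2
      constructor
      · intro _; linarith [h2.2]
      · intro _; exact le_of_lt hlt
    · have := hzeroq γ hγ heq
      constructor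
      · intro _; rw [this]
      · intro _; rw [heq]
    · have hne : wt σ γ ≠ 0 := ne_of_gt hgt
      have h1 := hmle γ hγ hne
      rw [abs_of_pos hgt] at h1
      have h2 := hdiff γ hγ
      rw [abs_le] at h2
      constructor
      · intro h; linarith
      · intro h; linarith [h2.1]
  -- scaling to integers
  set N : ℕ := ∏ x, (q x).den with hN
  have hNpos : 0 < N := Finset.prod_pos fun x _ => (q x).pos
  set σ₁ : Q0 → ℝ := fun x => (N : ℝ) * q x with hσ₁
  have hscale : ∀ γ : Q0 → ℕ, wt σ₁ γ = (N : ℝ) * wt σq γ := by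
    intro γ
    rw [wt, wt, Finset.mul_sum]
    congr 1; ext x; rw [hσ₁, hσq]; ring
  have hiff : ∀ γ : Q0 → ℕ, (∀ x, γ x ≤ β x) → (wt σ γ ≤ 0 ↔ wt σ₁ γ ≤ 0) := by
    intro γ h
    rw [hscale γ]
    have hNR : (0:ℝ) < N := by exact_mod_cast hNpos
    rw [hiffq γ (hmemG γ h)]
    constructor
    · intro hq0; exact mul_nonpos_of_nonneg_of_nonpos (le_of_lt hNR) hq0
    · intro hq0; nlinarith
  have hzero1 : ∀ γ : Q0 → ℕ, (∀ x, γ x ≤ β x) → wt σ γ = 0 → wt σ₁ γ = 0 := by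
    intro γ h h0
    rw [hscale γ, hzeroq γ (hmemG γ h) h0, mul_zero]
  have hβ1 : wt σ₁ β = 0 := hzero1 β (fun _ => le_refl _) hβ0
  -- dimension vectors of subspaces are ≤ β
  have hdimle : ∀ S : ∀ x, Submodule ℂ (Fin (β x) → ℂ), ∀ x, dimVec S x ≤ β x := by
    intro S x
    have h := Submodule.finrank_le (S x)
    rw [Module.finrank_fin_fun] at h
    exact h
  refine ⟨σ₁, ⟨hβ1, ?_⟩, ?_, ?_⟩
  · -- effectivity
    intro β₁ hemb
    obtain ⟨S, _, hSdim⟩ := hemb (fun a => 0)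
    have hle : ∀ x, β₁ x ≤ β x := by
      intro x
      rw [← hSdim x]
      exact hdimle S x
    exact (hiff β₁ hle).mp (heff β₁ hemb)
  · -- integrality
    intro x
    have hdvd : (q x).den ∣ N := Finset.dvd_prod_of_mem _ (Finset.mem_univ x)
    obtain ⟨M, hM⟩ := hdvd
    refine ⟨(q x).num * M, ?_⟩
    have hden : ((q x).den : ℚ) ≠ 0 := by
      exact_mod_cast (q x).den_nz
    have key : (N : ℚ) * q x = ((q x).num * M : ℤ) := by
      have h := Rat.mul_den_eq_num (q x)
      rw [hM]
      push_cast
      calc ((q x).den : ℚ) * M * q x = (q x * (q x).den) * M := by ring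
        _ = (q x).num * M := by rw [h]
    show (N : ℝ) * (q x : ℝ) = (((q x).num * M : ℤ) : ℝ)
    exact_mod_cast congrArg (Rat.cast (K := ℝ)) key
  · -- equality of semistable sets
    ext W
    constructor
    · rintro ⟨_, h2⟩
      exact ⟨hβ1, fun S hS => (hiff _ (hdimle S)).mp (h2 S hS)⟩
    · rintro ⟨_, h2⟩
      exact ⟨hβ0, fun S hS => (hiff _ (hdimle S)).mpr (h2 S hS)⟩


end

end QuiverGIT
end

section
/- Let Q be a finite quiver without oriented cycles, β a dimension vector, σ ∈ C(Q,β), and let W ∈ Rep(Q,β)^{ss}_σ be σ-polystable. If W' ⊆ W is a subrepresentation with σ(d_{W'}) = 0, then W is isomorphic to W' ⊕ (W/W'). -/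
/-!
Choose complements `T x` of `S x`. Conjugating `W` by the one-parameter subgroup `λ(t)` that
acts by `t` on `S` and by `1` on `T` gives `W₀ + t • N`, where `W₀` is the block-diagonal part of
`W` (a copy of `S ⊕ W/S`) and `N` its block `T → S`; letting `t → 0` puts `W₀` in the Zariski
closure of the orbit of `W`. `W₀` is again `σ`-semi-stable: for a subrepresentation `U` of `W₀`,
both `U ∩ S` and `U + S` are subrepresentations of `W`, so
`σ(U) = σ(U + S) + σ(U ∩ S) - σ(S) ≤ 0`. Since the orbit of `W` is closed in the semi-stable
locus, `W₀ = g • W` for some `g`, and `g⁻¹` embeds `S` and `T ≅ W/S` as complementary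
subrepresentations of `W`.
-/

open scoped BigOperators

namespace QuiverGIT

noncomputable section

variable {Q0 Q1 : Type} [Fintype Q0] [Fintype Q1]

variable {tl hd : Q1 → Q0} {β : Q0 → ℕ}

section BlockDecomposition

open Submodule

variable {R E F : Type*} [CommRing R] [AddCommGroup E] [Module R E] [AddCommGroup F] [Module R F]
  {p q : Submodule R E} {p' q' : Submodule R F}

theorem projection_projection (h : IsCompl p q) (v : E) :
    p.projection q h (p.projection q h v) = p.projection q h v :=
  projection_apply_of_mem_left h (projection_apply_mem h v)

theorem projection_projection_of_isCompl (h : IsCompl p q) (h' : IsCompl q p) (v : E) :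
    p.projection q h (q.projection p h' v) = 0 :=
  projection_apply_of_mem_right h (projection_apply_mem h' v)

def scaleUnit (h : IsCompl p q) (t : Rˣ) : (Module.End R E)ˣ where
  val := (t : R) • p.projection q h + q.projection p h.symm
  inv := ((t⁻¹ : Rˣ) : R) • p.projection q h + q.projection p h.symm
  val_inv := by
    ext v
    simp [projection_projection, projection_projection_of_isCompl, smul_smul,
      projection_add_projection_eq_self]
  inv_val := by
    ext v
    simp [projection_projection, projection_projection_of_isCompl, smul_smul,
      projection_add_projection_eq_self]

theorem scaleUnit_apply (h : IsCompl p q) (t : Rˣ) (v : E) :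
    (scaleUnit h t : Module.End R E) v = (t : R) • p.projection q h v + q.projection p h.symm v :=
  rfl

theorem scaleUnit_inv_apply (h : IsCompl p q) (t : Rˣ) (v : E) :
    (↑(scaleUnit h t)⁻¹ : Module.End R E) v =
      ((t⁻¹ : Rˣ) : R) • p.projection q h v + q.projection p h.symm v :=
  rfl

variable (hE : IsCompl p q) (hF : IsCompl p' q') (L : E →ₗ[R] F)

def blockDiag : E →ₗ[R] F :=
  p'.projection q' hF ∘ₗ L ∘ₗ p.projection q hE +
    q'.projection p' hF.symm ∘ₗ L ∘ₗ q.projection p hE.symm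

def offDiag : E →ₗ[R] F := p'.projection q' hF ∘ₗ L ∘ₗ q.projection p hE.symm

variable {L}

theorem blockDiag_add_offDiag (hL : ∀ v ∈ p, L v ∈ p') (v : E) :
    blockDiag hE hF L v + offDiag hE hF L v = L v := by
  have hLp : q'.projection p' hF.symm (L (p.projection q hE v)) = 0 :=
    projection_apply_of_mem_right hF.symm (hL _ (projection_apply_mem hE v))
  conv_rhs => rw [← projection_add_projection_eq_self hE v, map_add,
    ← projection_add_projection_eq_self hF (L (p.projection q hE v)), hLp,
    ← projection_add_projection_eq_self hF (L (q.projection p hE.symm v))]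
  simp only [blockDiag, offDiag, LinearMap.add_apply, LinearMap.comp_apply,
    projection_apply_of_mem_left hF (hL _ (projection_apply_mem hE v))]
  abel

variable {hE hF}

theorem blockDiag_apply_of_mem (hL : ∀ v ∈ p, L v ∈ p') {v : E} (hv : v ∈ p) :
    blockDiag hE hF L v = L v := by
  rw [← blockDiag_add_offDiag hE hF hL v, offDiag, LinearMap.comp_apply, LinearMap.comp_apply,
    projection_apply_of_mem_right hE.symm hv, map_zero, map_zero, add_zero]

theorem projection_symm_map_eq_blockDiag (hL : ∀ v ∈ p, L v ∈ p') (v : E) :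
    q'.projection p' hF.symm (L v) = blockDiag hE hF L (q.projection p hE.symm v) := by
  rw [← blockDiag_add_offDiag hE hF hL v]
  simp [blockDiag, offDiag, projection_projection, projection_projection_of_isCompl]

theorem scaleUnit_conj (hL : ∀ v ∈ p, L v ∈ p') (t : Rˣ) (v : E) :
    (scaleUnit hF t : Module.End R F) (L ((↑(scaleUnit hE t)⁻¹ : Module.End R E) v)) =
      blockDiag hE hF L v + (t : R) • offDiag hE hF L v := by
  have hLp : ∀ w, q'.projection p' hF.symm (L (p.projection q hE w)) = 0 := fun w =>
    projection_apply_of_mem_right hF.symm (hL _ (projection_apply_mem hE w))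
  rw [scaleUnit_inv_apply, scaleUnit_apply]
  simp only [blockDiag, offDiag, LinearMap.add_apply, LinearMap.comp_apply, map_add, map_smul,
    hLp, smul_zero, zero_add, smul_add, smul_smul, Units.mul_inv, one_smul]
  abel

end BlockDecomposition

theorem toLin'_coe_toLin_symm {R n : Type*} [CommRing R] [Fintype n] [DecidableEq n]
    (u : LinearMap.GeneralLinearGroup R (n → R)) :
    Matrix.toLin' (Matrix.GeneralLinearGroup.toLin.symm u : Matrix n n R) = u :=
  Matrix.toLinAlgEquiv'.apply_symm_apply _

section Degeneration

omit [Fintype Q0] [Fintype Q1]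

theorem mem_zClosure_of_add_smul_mem {Z : Set (RepSpace tl hd β)} {V M : RepSpace tl hd β}
    (h : ∀ t : ℂ, t ≠ 0 → V + t • M ∈ Z) : V ∈ zClosure Z := by
  intro p hp
  set q : Polynomial ℂ := MvPolynomial.eval₂ Polynomial.C
    (fun i => Polynomial.C (coordFn V i) + Polynomial.C (coordFn M i) * Polynomial.X) p
  have hq : ∀ t, q.eval t = MvPolynomial.eval (coordFn (V + t • M)) p := by
    intro t
    rw [← Polynomial.coe_evalRingHom, MvPolynomial.hom_eval₂]
    congr
    · exact RingHom.ext fun c => Polynomial.eval_C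
    · funext i
      simp only [coordFn, map_add, map_mul, Polynomial.coe_evalRingHom,
        Polynomial.eval_C, Polynomial.eval_X, Pi.add_apply, Pi.smul_apply, Matrix.add_apply,
        Matrix.smul_apply, smul_eq_mul, mul_comm]
  have hq0 : q = 0 := by
    refine Polynomial.eq_zero_of_infinite_isRoot q
      ((Set.finite_singleton (0 : ℂ)).infinite_compl.mono fun t ht => ?_)
    simpa [Polynomial.IsRoot, hq] using hp _ (h t ht)
  simpa [hq] using congrArg (Polynomial.eval 0) hq0

variable {S T : ∀ x, Submodule ℂ (Fin (β x) → ℂ)} (hST : ∀ x, IsCompl (S x) (T x))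

theorem IsSubrep.toLin'_mem {W : RepSpace tl hd β} (hS : IsSubrep W S) (a : Q1) :
    ∀ v ∈ S (tl a), Matrix.toLin' (W a) v ∈ S (hd a) := by
  simpa only [Matrix.toLin'_apply] using hS a

def degeneration (W : RepSpace tl hd β) : RepSpace tl hd β :=
  fun a => LinearMap.toMatrix' (blockDiag (hST (tl a)) (hST (hd a)) (Matrix.toLin' (W a)))

def offDiagPart (W : RepSpace tl hd β) : RepSpace tl hd β :=
  fun a => LinearMap.toMatrix' (offDiag (hST (tl a)) (hST (hd a)) (Matrix.toLin' (W a)))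

theorem toLin'_degeneration (W : RepSpace tl hd β) (a : Q1) :
    Matrix.toLin' (degeneration hST W a) =
      blockDiag (hST (tl a)) (hST (hd a)) (Matrix.toLin' (W a)) :=
  Matrix.toLin'_toMatrix' _

theorem mulVec_degeneration (W : RepSpace tl hd β) (a : Q1) (v : Fin (β (tl a)) → ℂ) :
    (degeneration hST W a).mulVec v =
      blockDiag (hST (tl a)) (hST (hd a)) (Matrix.toLin' (W a)) v := by
  rw [← Matrix.toLin'_apply, toLin'_degeneration]

def scaleGL (t : ℂˣ) (x : Q0) : GL (Fin (β x)) ℂ :=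
  Matrix.GeneralLinearGroup.toLin.symm (scaleUnit (hST x) t)

theorem toLin'_scaleGL (t : ℂˣ) (x : Q0) :
    Matrix.toLin' (scaleGL hST t x : Matrix (Fin (β x)) (Fin (β x)) ℂ) =
      (scaleUnit (hST x) t : Module.End ℂ (Fin (β x) → ℂ)) :=
  toLin'_coe_toLin_symm _

theorem toLin'_scaleGL_inv (t : ℂˣ) (x : Q0) :
    Matrix.toLin' (↑(scaleGL hST t x)⁻¹ : Matrix (Fin (β x)) (Fin (β x)) ℂ) =
      (↑(scaleUnit (hST x) t)⁻¹ : Module.End ℂ (Fin (β x) → ℂ)) := by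
  rw [scaleGL, ← map_inv, toLin'_coe_toLin_symm]

theorem glAct_scaleGL {W : RepSpace tl hd β} (hS : IsSubrep W S) (t : ℂˣ) :
    glAct (scaleGL hST t) W = degeneration hST W + (t : ℂ) • offDiagPart hST W := by
  funext a
  apply Matrix.toLin'.injective
  refine LinearMap.ext fun v => ?_
  rw [glAct, Matrix.toLin'_mul, Matrix.toLin'_mul, toLin'_scaleGL, toLin'_scaleGL_inv,
    Pi.add_apply, Pi.smul_apply, map_add, map_smul, toLin'_degeneration, offDiagPart,
    Matrix.toLin'_toMatrix']
  exact scaleUnit_conj (hS.toLin'_mem a) t v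

theorem degeneration_mem_zClosure {W : RepSpace tl hd β} (hS : IsSubrep W S) :
    degeneration hST W ∈ zClosure (glOrbit W) :=
  mem_zClosure_of_add_smul_mem fun t ht =>
    ⟨scaleGL hST (Units.mk0 t ht), (glAct_scaleGL hST hS (Units.mk0 t ht)).symm⟩

variable {hST} {W : RepSpace tl hd β} {U : ∀ x, Submodule ℂ (Fin (β x) → ℂ)}

theorem IsSubrep.inf_of_degeneration (hS : IsSubrep W S)
    (hU : IsSubrep (degeneration hST W) U) : IsSubrep W fun x => U x ⊓ S x := by
  rintro a v ⟨hvU, hvS⟩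
  refine ⟨?_, hS a v hvS⟩
  have := hU a v hvU
  rwa [mulVec_degeneration, blockDiag_apply_of_mem (hS.toLin'_mem a) hvS,
    Matrix.toLin'_apply] at this

theorem IsSubrep.sup_of_degeneration (hS : IsSubrep W S)
    (hU : IsSubrep (degeneration hST W) U) : IsSubrep W fun x => U x ⊔ S x := by
  intro a v hv
  obtain ⟨u, hu, s, hs, rfl⟩ := Submodule.mem_sup.1 hv
  rw [Matrix.mulVec_add, ← Matrix.toLin'_apply (W a) u,
    ← blockDiag_add_offDiag (hST (tl a)) (hST (hd a)) (hS.toLin'_mem a) u, add_assoc]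
  refine Submodule.add_mem_sup ?_
    (Submodule.add_mem _ (Submodule.projection_apply_mem _ _) (hS a s hs))
  simpa only [mulVec_degeneration] using hU a u hu

end Degeneration

section Semistability

omit [Fintype Q1]

theorem wt_dimVec_sup_add_wt_dimVec_inf (σ : Q0 → ℝ)
    (U S : ∀ x, Submodule ℂ (Fin (β x) → ℂ)) :
    wt σ (dimVec fun x => U x ⊔ S x) + wt σ (dimVec fun x => U x ⊓ S x) =
      wt σ (dimVec U) + wt σ (dimVec S) := by
  simp only [wt, dimVec, ← Finset.sum_add_distrib, ← mul_add]
  refine Finset.sum_congr rfl fun x _ => ?_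
  congr 1
  exact_mod_cast Submodule.finrank_sup_add_finrank_inf_eq (U x) (S x)

theorem semistable_degeneration {S T : ∀ x, Submodule ℂ (Fin (β x) → ℂ)}
    {hST : ∀ x, IsCompl (S x) (T x)} {σ : Q0 → ℝ} {W : RepSpace tl hd β}
    (hW : Semistable σ W) (hS : IsSubrep W S) (hS0 : wt σ (dimVec S) = 0) :
    Semistable σ (degeneration hST W) := by
  refine ⟨hW.1, fun U hU => ?_⟩
  have hsup := hW.2 _ (hS.sup_of_degeneration hU)
  have hinf := hW.2 _ (hS.inf_of_degeneration hU)
  linarith [wt_dimVec_sup_add_wt_dimVec_inf σ U S]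

end Semistability

section Splitting

omit [Fintype Q0] [Fintype Q1]

theorem inv_mulVec_glAct (g : ∀ x, GL (Fin (β x)) ℂ) (W : RepSpace tl hd β) (a : Q1)
    (v : Fin (β (tl a)) → ℂ) :
    (↑(g (hd a))⁻¹ : Matrix _ _ ℂ).mulVec ((glAct g W a).mulVec v) =
      (W a).mulVec ((↑(g (tl a))⁻¹ : Matrix _ _ ℂ).mulVec v) := by
  rw [Matrix.mulVec_mulVec, Matrix.mulVec_mulVec, glAct, ← Matrix.mul_assoc, ← Matrix.mul_assoc,
    Units.inv_mul, Matrix.one_mul]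

theorem isGradedIso_two_step {W V : RepSpace tl hd β}
    {S : ∀ x, Submodule ℂ (Fin (β x) → ℂ)} (f₀ f₁ : ∀ x, (Fin (β x) → ℂ) →ₗ[ℂ] (Fin (β x) → ℂ))
    (hf₀ : ∀ x, ∀ v ∈ S x, f₀ x v = 0 → v = 0)
    (hf₀W : ∀ a, ∀ v ∈ S (tl a),
      f₀ (hd a) ((W a).mulVec v) = (V a).mulVec (f₀ (tl a) v))
    (hf₁ : ∀ x, LinearMap.ker (f₁ x) = S x)
    (hf₁W : ∀ a v, f₁ (hd a) ((W a).mulVec v) = (V a).mulVec (f₁ (tl a) v))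
    (hcompl : ∀ x, IsCompl ((S x).map (f₀ x)) (LinearMap.range (f₁ x))) :
    IsGradedIso W V 2 ![fun _ => ⊥, S, fun _ => ⊤] := by
  refine ⟨![f₀, f₁], ?_, ?_, ?_, fun x => ?_, fun x => ?_⟩
  · intro i x v hv
    fin_cases i
    · simp_all
    · simpa [← LinearMap.mem_ker, hf₁] using hv
  · intro i x v hv hv0
    fin_cases i
    · simpa using hf₀ x v hv hv0
    · simpa [← LinearMap.mem_ker, hf₁] using hv0
  · intro i a v hv
    fin_cases i
    · simpa using hf₀W a v hv
    · simpa using hf₁W a v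
  · refine (iSupIndep_pair zero_ne_one fun k => ?_).2
      ((hcompl x).disjoint.mono_right (Submodule.map_top (f₁ x)).le)
    fin_cases k <;> decide
  · exact eq_top_iff.2 ((hcompl x).sup_eq_top.ge.trans
      (sup_le (le_iSup_of_le 0 le_rfl) (le_iSup_of_le 1 (Submodule.map_top (f₁ x)).ge)))

theorem isGradedIso_of_degeneration_mem_glOrbit {S T : ∀ x, Submodule ℂ (Fin (β x) → ℂ)}
    {hST : ∀ x, IsCompl (S x) (T x)} {W : RepSpace tl hd β} (hS : IsSubrep W S)
    (h : degeneration hST W ∈ glOrbit W) : IsGradedIso W W 2 ![fun _ => ⊥, S, fun _ => ⊤] := by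
  obtain ⟨g, hg⟩ := h
  let e : ∀ x, (Fin (β x) → ℂ) ≃ₗ[ℂ] (Fin (β x) → ℂ) := fun x =>
    LinearMap.GeneralLinearGroup.generalLinearEquiv ℂ _ (Matrix.GeneralLinearGroup.toLin (g x)⁻¹)
  have he : ∀ a v, e (hd a) (blockDiag (hST (tl a)) (hST (hd a)) (Matrix.toLin' (W a)) v) =
      (W a).mulVec (e (tl a) v) := by
    intro a v
    rw [← mulVec_degeneration, hg]
    exact inv_mulVec_glAct g W a v
  refine isGradedIso_two_step (fun x => e x)
    (fun x => e x ∘ₗ (T x).projection (S x) (hST x).symm)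
    (fun x v _ hv => (e x).map_eq_zero_iff.1 hv) (fun a v hv => ?_) (fun x => ?_)
    (fun a v => ?_) (fun x => ?_)
  · rw [← Matrix.toLin'_apply, ← blockDiag_apply_of_mem (hS.toLin'_mem a) hv]
    exact he a v
  · rw [LinearEquiv.ker_comp, Submodule.ker_projection]
  · rw [LinearMap.comp_apply, LinearMap.comp_apply, ← Matrix.toLin'_apply,
      projection_symm_map_eq_blockDiag (hS.toLin'_mem a)]
    exact he a _
  · rw [LinearMap.range_comp, Submodule.range_projection]
    exact (Submodule.orderIsoMapComap (e x)).isCompl (hST x)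

end Splitting

theorem polystable_summand_splits_general
    (σ : Q0 → ℝ)
    (W : RepSpace tl hd β) (hW : Polystable σ W)
    (S : ∀ x, Submodule ℂ (Fin (β x) → ℂ)) (hS : IsSubrep W S)
    (hS0 : wt σ (dimVec S) = 0) :
    IsGradedIso W W 2 ![fun _ => ⊥, S, fun _ => ⊤] := by
  choose T hST using fun x => (S x).exists_isCompl
  have hdeg : degeneration hST W ∈ glOrbit W := by
    rw [← hW.2]
    exact ⟨degeneration_mem_zClosure hST hS, semistable_degeneration hW.1 hS hS0⟩
  exact isGradedIso_of_degeneration_mem_glOrbit hS hdeg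

/-- If `W` is `σ`-polystable and `W' ⊆ W` is a subrepresentation with
`σ(d_{W'}) = 0`, then `W ≅ W' ⊕ (W/W')` (expressed as: `W` is isomorphic to the
associated graded of the two-step filtration `0 ⊆ W' ⊆ W`). -/
theorem polystable_summand_splits (hQ : NoOrientedCycles tl hd)
    (σ : Q0 → ℝ) (hσ : σ ∈ EffCone tl hd β)
    (W : RepSpace tl hd β) (hW : Polystable σ W)
    (S : ∀ x, Submodule ℂ (Fin (β x) → ℂ)) (hS : IsSubrep W S)
    (hS0 : wt σ (dimVec S) = 0) :
    IsGradedIso W W 2 ![fun _ => ⊥, S, fun _ => ⊤] :=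
  polystable_summand_splits_general σ W hW S hS hS0

end

end QuiverGIT
end
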